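/- Define the East-process energy barrier h(x, x') as the minimum over all East-process transition paths from x to x' of the maximum number of occupied sites |x^j| over configurations x^j on the path. Then h(δ_0, δ_0 + δ_{2^m}) ≤ m + 2 for every m ≥ 0. -/
import Mathlib


/-- A possible transition of the East process on sites `ℕ`, with site 0 always
occupied: exactly one site `i ≥ 1` flips, allowed only when site `i-1` is occupied. -/
def EastStep (s t : Finset ℕ) : Prop :=
  ∃ i : ℕ, 1 ≤ i ∧ (i - 1) ∈ s ∧
    ((i ∉ s ∧ t = insert i s) ∨ (i ∈ s ∧ t = s.erase i))

/-- The energy barrier `h(x,x')`: the infimum over East-process paths from `x` to `x'`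
of the maximal number of occupied sites along the path (`⊤` if no path exists). -/
noncomputable def energyBarrier (s t : Finset ℕ) : ℕ∞ :=
  sInf {B : ℕ∞ | ∃ (L : ℕ) (f : ℕ → Finset ℕ),
    f 0 = s ∧ f L = t ∧ (∀ j < L, EastStep (f j) (f (j + 1))) ∧
    ∀ j ≤ L, ((f j).card : ℕ∞) ≤ B}

lemma eastStep_symm {s t : Finset ℕ} (h : EastStep s t) : EastStep t s := by
  obtain ⟨i, hi1, hip, hcase⟩ := h
  refine ⟨i, hi1, ?_, ?_⟩
  · rcases hcase with ⟨hni, ht⟩ | ⟨hmi, ht⟩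
    · subst ht; exact Finset.mem_insert_of_mem hip
    · subst ht; exact Finset.mem_erase.2 ⟨by omega, hip⟩
  · rcases hcase with ⟨hni, ht⟩ | ⟨hmi, ht⟩
    · subst ht
      exact Or.inr ⟨Finset.mem_insert_self i s, by rw [Finset.erase_insert hni]⟩
    · subst ht
      exact Or.inl ⟨Finset.notMem_erase i s, by rw [Finset.insert_erase hmi]⟩

lemma eastStep_insert {s t : Finset ℕ} {a : ℕ} (h : EastStep s t)
    (has : a ∉ s) (hat : a ∉ t) : EastStep (insert a s) (insert a t) := by
  obtain ⟨i, hi1, hip, hcase⟩ := h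
  refine ⟨i, hi1, Finset.mem_insert_of_mem hip, ?_⟩
  rcases hcase with ⟨hni, ht⟩ | ⟨hmi, ht⟩
  · have hia : i ≠ a := by rintro rfl; exact hat (ht ▸ Finset.mem_insert_self i s)
    refine Or.inl ⟨?_, ?_⟩
    · simp [Finset.mem_insert, hia, hni]
    · rw [ht, Finset.insert_comm]
  · have hia : i ≠ a := by rintro rfl; exact has hmi
    refine Or.inr ⟨Finset.mem_insert_of_mem hmi, ?_⟩
    rw [ht, Finset.erase_insert_of_ne (Ne.symm hia)]

lemma eastStep_shift {s t : Finset ℕ} (c : ℕ) (h : EastStep s t) :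
    EastStep (s.image (· + c)) (t.image (· + c)) := by
  obtain ⟨i, hi1, hip, hcase⟩ := h
  have hinj : Function.Injective (· + c) := add_left_injective c
  refine ⟨i + c, by omega, ?_, ?_⟩
  · have : i + c - 1 = (i - 1) + c := by omega
    rw [this]
    exact Finset.mem_image_of_mem _ hip
  · rcases hcase with ⟨hni, ht⟩ | ⟨hmi, ht⟩
    · refine Or.inl ⟨?_, ?_⟩
      · simp only [Finset.mem_image, not_exists]
        rintro x ⟨hx, hxe⟩
        have hxi : x = i := by omega
        exact hni (hxi ▸ hx)
      · rw [ht, Finset.image_insert]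
    · refine Or.inr ⟨Finset.mem_image_of_mem _ hmi, ?_⟩
      rw [ht, Finset.image_erase hinj]

/-- Key inductive construction: a path from `{0}` to `{0, 2^m}` staying within
`[0, 2^m]` with at most `m+2` occupied sites. -/
lemma east_path (m : ℕ) : ∃ (L : ℕ) (f : ℕ → Finset ℕ), 1 ≤ L ∧
    f 0 = {0} ∧ f L = {0, 2 ^ m} ∧ (∀ j < L, EastStep (f j) (f (j + 1))) ∧
    (∀ j ≤ L, (f j).card ≤ m + 2) ∧ (∀ j ≤ L, ∀ k ∈ f j, k ≤ 2 ^ m) := by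
  induction m with
  | zero =>
    refine ⟨1, fun j => if j = 0 then {0} else {0, 1}, le_refl 1, rfl, rfl, ?_, ?_, ?_⟩
    · intro j hj
      interval_cases j
      exact ⟨1, le_refl 1, by decide, Or.inl ⟨by decide, by decide⟩⟩
    · intro j hj; interval_cases j <;> decide
    · intro j hj; interval_cases j <;> simp_all
  | succ m ih =>
    obtain ⟨L, f, hL1, hf0, hfL, hstep, hcard, hsites⟩ := ih
    set a := 2 ^ (m + 1) with ha
    have hpow : 2 ^ (m + 1) = 2 ^ m + 2 ^ m := by ring
    set F : ℕ → Finset ℕ := fun j =>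
      if j ≤ L then f j
      else if j ≤ 2 * L then insert 0 ((f (j - L)).image (· + 2 ^ m))
      else insert a (f (3 * L - j)) with hF
    -- the gluing identities
    have hglue1 : f L = insert 0 ((f 0).image (· + 2 ^ m)) := by
      rw [hfL, hf0]; simp
    have hglue2 : insert 0 ((f L).image (· + 2 ^ m)) = insert a (f L) := by
      rw [hfL]
      ext k
      simp [Finset.mem_insert, ha, hpow]
      omega
    have hFmid : ∀ j, L ≤ j → j ≤ 2 * L → F j = insert 0 ((f (j - L)).image (· + 2 ^ m)) := by
      intro j hj1 hj2
      rcases eq_or_lt_of_le hj1 with rfl | hlt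
      · simp only [hF, le_refl, if_pos, Nat.sub_self]
        exact hglue1
      · simp only [hF]
        rw [if_neg (by omega), if_pos hj2]
    have hFlast : ∀ j, 2 * L ≤ j → j ≤ 3 * L → F j = insert a (f (3 * L - j)) := by
      intro j hj1 hj2
      rcases eq_or_lt_of_le hj1 with rfl | hlt
      · rw [hFmid _ (by omega) (le_refl _)]
        have : 2 * L - L = L := by omega
        rw [this]
        have : 3 * L - 2 * L = L := by omega
        rw [this]
        exact hglue2
      · simp only [hF]
        rw [if_neg (by omega), if_neg (by omega)]
    have hanotin : ∀ j ≤ L, a ∉ f j := by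
      intro j hj hmem
      have := hsites j hj a hmem
      have : (2:ℕ) ^ m < 2 ^ (m + 1) := by
        have := Nat.one_le_two_pow (n := m)
        omega
      omega
    refine ⟨3 * L, F, by omega, ?_, ?_, ?_, ?_, ?_⟩
    · simp only [hF, if_pos (Nat.zero_le L)]; exact hf0
    · rw [hFlast _ (by omega) (le_refl _)]
      have : 3 * L - 3 * L = 0 := by omega
      rw [this, hf0]
      ext k; simp [Finset.mem_insert]; tauto
    · intro j hj
      rcases lt_or_ge j L with h1 | h1
      · simp only [hF, if_pos (le_of_lt h1), if_pos (by omega : j + 1 ≤ L)]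
        exact hstep j h1
      rcases lt_or_ge j (2 * L) with h2 | h2
      · rw [hFmid j h1 (by omega), hFmid (j + 1) (by omega) (by omega)]
        have harith : j + 1 - L = (j - L) + 1 := by omega
        rw [harith]
        have hs := eastStep_shift (2 ^ m) (hstep (j - L) (by omega))
        refine eastStep_insert hs ?_ ?_ <;>
        · simp only [Finset.mem_image, not_exists]
          rintro x ⟨hx, hxe⟩
          exact (Nat.add_pos_right x (Nat.two_pow_pos m)).ne' hxe
      · rw [hFlast j h2 (by omega), hFlast (j + 1) (by omega) (by omega)]
        have hk : 3 * L - (j + 1) < L := by omega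
        have harith : (3 * L - (j + 1)) + 1 = 3 * L - j := by omega
        have hs := eastStep_symm (hstep (3 * L - (j + 1)) hk)
        rw [harith] at hs
        exact eastStep_insert hs (hanotin _ (by omega)) (hanotin _ (by omega))
    · intro j hj
      rcases le_or_gt j L with h1 | h1
      · simp only [hF, if_pos h1]
        have := hcard j h1; omega
      rcases le_or_gt j (2 * L) with h2 | h2
      · rw [hFmid j (by omega) h2]
        calc (insert 0 ((f (j - L)).image (· + 2 ^ m))).card
            ≤ ((f (j - L)).image (· + 2 ^ m)).card + 1 := Finset.card_insert_le _ _
          _ ≤ (f (j - L)).card + 1 := by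
              have := Finset.card_image_le (s := f (j - L)) (f := (· + 2 ^ m)); omega
          _ ≤ m + 1 + 2 := by have := hcard (j - L) (by omega); omega
      · rw [hFlast j (by omega) hj]
        calc (insert a (f (3 * L - j))).card ≤ (f (3 * L - j)).card + 1 :=
            Finset.card_insert_le _ _
          _ ≤ m + 1 + 2 := by have := hcard (3 * L - j) (by omega); omega
    · intro j hj k hk
      have h2pow : (2:ℕ) ^ m + 2 ^ m = 2 ^ (m + 1) := by omega
      rcases le_or_gt j L with h1 | h1
      · simp only [hF, if_pos h1] at hk
        have := hsites j h1 k hk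
        have := Nat.one_le_two_pow (n := m)
        omega
      rcases le_or_gt j (2 * L) with h2 | h2
      · rw [hFmid j (by omega) h2] at hk
        rcases Finset.mem_insert.1 hk with rfl | hk
        · exact Nat.zero_le _
        · obtain ⟨x, hx, rfl⟩ := Finset.mem_image.1 hk
          have := hsites (j - L) (by omega) x hx
          omega
      · rw [hFlast j (by omega) hj] at hk
        rcases Finset.mem_insert.1 hk with rfl | hk
        · omega
        · have := hsites (3 * L - j) (by omega) k hk
          have := Nat.one_le_two_pow (n := m)
          omega

theorem energyBarrier_le (m : ℕ) :
    energyBarrier {0} {0, 2 ^ m} ≤ (m + 2 : ℕ∞) := by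
  obtain ⟨L, f, _, hf0, hfL, hstep, hcard, _⟩ := east_path m
  apply sInf_le
  refine ⟨L, f, hf0, hfL, hstep, ?_⟩
  intro j hj
  have := hcard j hj
  exact_mod_cast Nat.cast_le.2 this
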